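/- Fix an n×n rational orthogonal matrix Q of the canonical form diag(Q_s, I_{n-s}), where Q_s has height at most h and no entries equal to ±1. Let A be the adjacency matrix of an Erdős–Rényi random graph G(n,p). Then Pr(Q^T A Q has all integer entries) ≤ p̂^{(s/(2h^4))·(s/(2h^4) + n - s - 1)}, where p̂ = max(p, 1-p). -/

import Mathlib

/-!
Each column and each row of the orthogonal matrix `Q` has unit norm, while a nonzero entry of
`Q_s` with denominator at most `h` has square at least `1 / h²`; so every row and column of `Q_s`
has at most `h²` nonzero entries, and a greedy choice yields a set `C` of at least `s / h⁴`
columns of `Q_s` with pairwise disjoint supports. Pick a row `r i` in the support of each column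
`i`, split `C` into `I` and `J₀` of sizes `⌈m⌉` and `⌈m⌉ - 1` where `m = s / (2h⁴)`, and put
`J = J₀ ∪ {s, …, n - 1}`. For `i ∈ I` and `j ∈ J`, toggling the edge `{r i, r j}` moves
`(QᵀAQ) i j` by `Q (r i) i * Q (r j) j`, which is not an integer because the entries of `Q_s` lie
strictly between `-1` and `1`, and leaves every other `(QᵀAQ) i' j'` with `i' ∈ I`, `j' ∈ J`
unchanged. Integrating out these `|I| |J|` edges one at a time, each of the corresponding
integrality events costs a factor `max p (1 - p)`.
-/

open MeasureTheory ENNReal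

/-- The adjacency matrix of the graph on `Fin n` whose edges are the pairs
`i < j` with `ω ⟨(i,j), _⟩ = true`. -/
def adjMat (n : ℕ) (ω : {e : Fin n × Fin n // e.1 < e.2} → Bool) :
    Matrix (Fin n) (Fin n) ℚ := fun i j =>
  if hij : i < j then (if ω ⟨(i, j), hij⟩ then 1 else 0)
  else if hji : j < i then (if ω ⟨(j, i), hji⟩ then 1 else 0) else 0

open Finset Function
open scoped Matrix

theorem Rat.one_le_sq_mul_sq_of_den_le {q : ℚ} {h : ℕ} (hq : q ≠ 0) (hden : q.den ≤ h) :
    1 ≤ q ^ 2 * h ^ 2 := calc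
  (1 : ℚ) ≤ q.num ^ 2 :=
      mod_cast (one_le_sq_iff_one_le_abs _).2 (Int.one_le_abs (Rat.num_ne_zero.2 hq))
  _ = q ^ 2 * q.den ^ 2 := by rw [← Rat.mul_den_eq_num, mul_pow]
  _ ≤ q ^ 2 * h ^ 2 := by gcongr

theorem Rat.mul_ne_intCast {x y : ℚ} (hx : x ≠ 0) (hx1 : x ^ 2 < 1) (hy : y ≠ 0)
    (hy1 : y ^ 2 ≤ 1) (z : ℤ) : x * y ≠ z := by
  intro hz
  have hz0 : z ≠ 0 := by rintro rfl; simp_all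
  have hz1 : (1 : ℚ) ≤ z ^ 2 := mod_cast (one_le_sq_iff_one_le_abs _).2 (Int.one_le_abs hz0)
  rw [← hz, mul_pow] at hz1
  nlinarith [sq_nonneg x]

theorem card_ne_zero_le_sq_of_den_le {ι : Type*} [Fintype ι] (f : ι → ℚ) {h : ℕ}
    (hsum : ∑ k, f k ^ 2 = 1) (hden : ∀ k, f k ≠ 0 → (f k).den ≤ h) :
    #{k | f k ≠ 0} ≤ h ^ 2 := by
  have : (#{k | f k ≠ 0} : ℚ) ≤ h ^ 2 := calc
    (#{k | f k ≠ 0} : ℚ) = ∑ k with f k ≠ 0, 1 := by simp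
    _ ≤ ∑ k with f k ≠ 0, f k ^ 2 * h ^ 2 := sum_le_sum fun k hk =>
        Rat.one_le_sq_mul_sq_of_den_le (mem_filter.1 hk).2 (hden k (mem_filter.1 hk).2)
    _ ≤ ∑ k, f k ^ 2 * h ^ 2 :=
        sum_le_sum_of_subset_of_nonneg (filter_subset _ _) fun _ _ _ => by positivity
    _ = h ^ 2 := by rw [← sum_mul, hsum, one_mul]
  exact_mod_cast this

theorem Finset.exists_pairwiseDisjoint_subset_card_le_mul {α β : Type*} [DecidableEq α]
    [DecidableEq β] (f : α → Finset β) (P : Finset α) (B : ℕ) (hne : ∀ a ∈ P, (f a).Nonempty)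
    (hdeg : ∀ a ∈ P, #{a' ∈ P | ¬Disjoint (f a') (f a)} ≤ B) :
    ∃ C ⊆ P, (C : Set α).PairwiseDisjoint f ∧ #P ≤ B * #C := by
  induction P using Finset.strongInduction with
  | H P ih =>
  rcases P.eq_empty_or_nonempty with rfl | ⟨a, ha⟩
  · exact ⟨∅, empty_subset _, by simp, by simp⟩
  set P' := {a' ∈ P | Disjoint (f a') (f a)}
  have haP' : a ∉ P' := fun h => by
    obtain ⟨x, hx⟩ := hne a ha
    exact disjoint_left.1 (mem_filter.1 h).2 hx hx
  have hP' : P' ⊂ P := ssubset_iff_of_subset (filter_subset _ _) |>.2 ⟨a, ha, haP'⟩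
  obtain ⟨C, hCP', hCdisj, hCcard⟩ := ih P' hP' (fun a' h => hne a' (hP'.subset h))
    fun a' h => (card_le_card (filter_subset_filter _ hP'.subset)).trans (hdeg a' (hP'.subset h))
  refine ⟨insert a C, insert_subset ha (hCP'.trans hP'.subset), ?_, ?_⟩
  · rw [coe_insert]
    exact hCdisj.insert fun a' ha' _ => (mem_filter.1 (hCP' ha')).2.symm
  · rw [card_insert_of_notMem (fun h => haP' (hCP' h)), mul_add_one,
      ← card_filter_add_card_filter_not (s := P) (fun a' => Disjoint (f a') (f a))]
    exact add_le_add hCcard (hdeg a ha)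

section ProductMeasure
variable {ι X : Type*} [DecidableEq ι] [MeasurableSpace X] [Countable X]
  [MeasurableSingletonClass X] {ν : Measure X}

theorem lintegral_indicator_one_update (S : Set (ι → X)) (ω : ι → X) (i : ι) :
    ∫⁻ x, S.indicator 1 (update ω i x) ∂ν = ν {x | update ω i x ∈ S} := by
  rw [← lintegral_indicator_one .of_discrete]; rfl

variable [Fintype ι] [IsProbabilityMeasure ν] {c : ℝ≥0∞}

/- Integrate out the coordinate `i` first: the section of `A` through `ω` is empty or all of `X`,
and the section of `A ∩ E` has at most one point. -/
theorem pi_inter_le_mul (hc : ∀ x, ν {x} ≤ c) {A E : Set (ι → X)} {i : ι}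
    (hA : ∀ ω x, update ω i x ∈ A ↔ ω ∈ A) (hE : ∀ ω, {x | update ω i x ∈ E}.Subsingleton) :
    Measure.pi (fun _ => ν) (A ∩ E) ≤ c * Measure.pi (fun _ => ν) A := by
  have hsection (ω : ι → X) :
      ν {x | update ω i x ∈ A ∩ E} ≤ c * ν {x | update ω i x ∈ A} := by
    by_cases hω : ω ∈ A
    · rcases (hE ω).eq_empty_or_singleton with h | ⟨x, h⟩ <;> simp_all
    · simp [hω, hA]
  have hmarginal := lmarginal_le_of_subset (μ := fun _ => ν) (subset_univ {i})
    (f := (A ∩ E).indicator 1) (g := fun ω => c * A.indicator 1 ω) .of_discrete .of_discrete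
    fun ω => by
      simp only [lmarginal_singleton, lintegral_const_mul c .of_discrete,
        lintegral_indicator_one_update]
      exact hsection ω
  have : Nonempty X := nonempty_of_isProbabilityMeasure ν
  simpa [lintegral_indicator_one, MeasurableSet.of_discrete, lintegral_const_mul c .of_discrete]
    using hmarginal fun _ => Classical.arbitrary X

theorem pi_biInter_le_pow {T : Type*} (hc : ∀ x, ν {x} ≤ c) (S : Finset T)
    (E : T → Set (ι → X)) (e : T → ι)
    (hE : ∀ t ∈ S, ∀ ω, {x | update ω (e t) x ∈ E t}.Subsingleton)
    (hindep : ∀ t ∈ S, ∀ t' ∈ S, t ≠ t' → ∀ ω x, update ω (e t) x ∈ E t' ↔ ω ∈ E t') :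
    Measure.pi (fun _ => ν) (⋂ t ∈ S, E t) ≤ c ^ #S := by
  classical
  induction S using Finset.induction with
  | empty => simp
  | insert t S ht ih =>
    have hA (ω x) : update ω (e t) x ∈ ⋂ t' ∈ S, E t' ↔ ω ∈ ⋂ t' ∈ S, E t' := by
      simp only [Set.mem_iInter]
      exact forall₂_congr fun t' ht' => hindep t (mem_insert_self t S) t'
        (mem_insert_of_mem ht') (ne_of_mem_of_not_mem ht' ht).symm ω x
    calc Measure.pi (fun _ => ν) (⋂ t' ∈ insert t S, E t')
        = Measure.pi (fun _ => ν) ((⋂ t' ∈ S, E t') ∩ E t) := by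
          rw [set_biInter_insert, Set.inter_comm]
      _ ≤ c * Measure.pi (fun _ => ν) (⋂ t' ∈ S, E t') :=
          pi_inter_le_mul hc hA (hE t (mem_insert_self t S))
      _ ≤ c * c ^ #S := by
          gcongr
          exact ih (fun t' ht' => hE t' (mem_insert_of_mem ht'))
            fun t₁ h₁ t₂ h₂ => hindep t₁ (mem_insert_of_mem h₁) t₂ (mem_insert_of_mem h₂)
      _ = c ^ #(insert t S) := by rw [card_insert_of_notMem ht, pow_succ']

end ProductMeasure

theorem PMF.toMeasure_bernoulli_singleton_le {p : ℝ} (hp1 : p < 1) (b : Bool) :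
    (PMF.bernoulli (Real.toNNReal p) (Real.toNNReal_le_one.mpr hp1.le)).toMeasure {b}
      ≤ ENNReal.ofReal (max p (1 - p)) := by
  rw [PMF.toMeasure_apply_singleton _ _ (measurableSet_singleton b), PMF.bernoulli_apply]
  cases b
  · rw [cond_false]
    refine ENNReal.coe_le_coe.2 ((Real.le_toNNReal_iff_coe_le (by simp [hp1.le])).2 ?_)
    rw [NNReal.coe_sub_def, NNReal.coe_one, Real.coe_toNNReal']
    exact max_le (by linarith [le_max_left p 0, le_max_right p (1 - p)]) (by simp [hp1.le])
  · exact ENNReal.ofReal_le_ofReal (le_max_left _ _)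

theorem Bool.setOf_subsingleton {p : Bool → Prop} (h : ¬(p true ∧ p false)) :
    {b | p b}.Subsingleton := by
  rintro (_ | _) hx (_ | _) hy <;> first | rfl | exact absurd ⟨‹_›, ‹_›⟩ h

theorem Matrix.mul_single_mul_apply {l m o p R : Type*} [Fintype m] [Fintype o] [DecidableEq m]
    [DecidableEq o] [NonUnitalNonAssocSemiring R] (A : Matrix l m R) (B : Matrix o p R)
    (u : m) (v : o) (c : R) (i : l) (j : p) :
    (A * Matrix.single u v c * B) i j = A i u * c * B v j := by
  simp [Matrix.mul_apply, Matrix.single_apply, ite_and]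

abbrev Edge (n : ℕ) : Type := {e : Fin n × Fin n // e.1 < e.2}

section AdjMat
variable {n : ℕ}

/-- The change of `(Qᵀ * A * Q) i j` when the edge `{u, v}` is added to the graph of `A`. -/
def flipCoeff (Q : Matrix (Fin n) (Fin n) ℚ) (u v i j : Fin n) : ℚ :=
  Q u i * Q v j + Q v i * Q u j

def intEntryEvent (Q : Matrix (Fin n) (Fin n) ℚ) (i j : Fin n) : Set (Edge n → Bool) :=
  {ω | ∃ z : ℤ, (Qᵀ * adjMat n ω * Q) i j = z}

theorem flipCoeff_comm (Q : Matrix (Fin n) (Fin n) ℚ) (u v i j : Fin n) :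
    flipCoeff Q u v i j = flipCoeff Q v u i j :=
  add_comm _ _

theorem adjMat_update (ω : Edge n → Bool) (e : Edge n) (b : Bool) :
    adjMat n (update ω e b) = adjMat n (update ω e false) +
      (if b then (1 : ℚ) else 0) • (Matrix.single e.1.1 e.1.2 1 + Matrix.single e.1.2 e.1.1 1) := by
  obtain ⟨⟨u, v⟩, huv : u < v⟩ := e
  ext i j
  simp only [adjMat, update_apply, Subtype.mk.injEq, Prod.mk.injEq, Matrix.add_apply,
    Matrix.smul_apply, Matrix.single_apply, smul_eq_mul]
  split_ifs <;> grind

theorem mul_adjMat_update_mul_apply (Q : Matrix (Fin n) (Fin n) ℚ) (ω : Edge n → Bool)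
    (e : Edge n) (b : Bool) (i j : Fin n) :
    (Qᵀ * adjMat n (update ω e b) * Q) i j = (Qᵀ * adjMat n (update ω e false) * Q) i j +
      (if b then 1 else 0) * flipCoeff Q e.1.1 e.1.2 i j := by
  rw [adjMat_update]
  simp only [Matrix.mul_add, Matrix.add_mul, Matrix.mul_smul, Matrix.smul_mul, Matrix.add_apply,
    Matrix.smul_apply, Matrix.mul_single_mul_apply, Matrix.transpose_apply, smul_eq_mul, mul_one,
    flipCoeff]

theorem update_mem_intEntryEvent_iff {Q : Matrix (Fin n) (Fin n) ℚ} {e : Edge n} {i j : Fin n}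
    (h : flipCoeff Q e.1.1 e.1.2 i j = 0) (ω : Edge n → Bool) (b : Bool) :
    update ω e b ∈ intEntryEvent Q i j ↔ ω ∈ intEntryEvent Q i j := by
  have hb (b : Bool) : (Qᵀ * adjMat n (update ω e b) * Q) i j =
      (Qᵀ * adjMat n (update ω e false) * Q) i j := by
    rw [mul_adjMat_update_mul_apply, h, mul_zero, add_zero]
  simp only [intEntryEvent, Set.mem_ofPred_eq, hb b]
  conv_rhs => rw [← update_eq_self e ω, hb]

theorem subsingleton_update_mem_intEntryEvent {Q : Matrix (Fin n) (Fin n) ℚ} {e : Edge n}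
    {i j : Fin n} (h : ∀ z : ℤ, flipCoeff Q e.1.1 e.1.2 i j ≠ z) (ω : Edge n → Bool) :
    {b | update ω e b ∈ intEntryEvent Q i j}.Subsingleton := by
  refine Bool.setOf_subsingleton fun ⟨⟨z₁, h₁⟩, ⟨z₂, h₂⟩⟩ => h (z₁ - z₂) ?_
  rw [mul_adjMat_update_mul_apply, if_pos rfl, one_mul] at h₁
  push_cast
  linear_combination h₁ - h₂

theorem exists_edge_flipCoeff_eq {u v : Fin n} (huv : u ≠ v) :
    ∃ e : Edge n, ∀ Q i j, flipCoeff Q e.1.1 e.1.2 i j = flipCoeff Q u v i j := by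
  rcases lt_or_gt_of_ne huv with h | h
  exacts [⟨⟨(u, v), h⟩, fun _ _ _ => rfl⟩, ⟨⟨(v, u), h⟩, fun Q i j => flipCoeff_comm Q v u i j⟩]

end AdjMat

section IndependentEntries
variable {n : ℕ} {Q : Matrix (Fin n) (Fin n) ℚ} {I J : Finset (Fin n)} {r : Fin n → Fin n}

theorem flipCoeff_eq_ite (hIJ : Disjoint I J)
    (hsupp : ∀ i ∈ I ∪ J, ∀ j ∈ I ∪ J, i ≠ j → Q (r i) j = 0)
    {i i' j j' : Fin n} (hi : i ∈ I) (hi' : i' ∈ I) (hj : j ∈ J) (hj' : j' ∈ J) :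
    flipCoeff Q (r i) (r j) i' j' = if (i, j) = (i', j') then Q (r i) i * Q (r j) j else 0 := by
  have hmem {k} (hk : k ∈ I ∨ k ∈ J) : k ∈ I ∪ J := mem_union.2 hk
  have hne {a b} (ha : a ∈ I) (hb : b ∈ J) : a ≠ b := fun h => disjoint_left.1 hIJ ha (h ▸ hb)
  rw [flipCoeff, hsupp i (hmem (.inl hi)) j' (hmem (.inr hj')) (hne hi hj'), mul_zero, add_zero]
  split_ifs with h
  · obtain ⟨rfl, rfl⟩ := Prod.ext_iff.1 h
    rfl
  · rcases not_and_or.1 (mt Prod.ext_iff.2 h) with h | h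
    · rw [hsupp i (hmem (.inl hi)) i' (hmem (.inl hi')) h, zero_mul]
    · rw [hsupp j (hmem (.inr hj)) j' (hmem (.inr hj')) h, mul_zero]

theorem pi_setOf_forall_mem_intEntryEvent_le (hIJ : Disjoint I J)
    (hsupp : ∀ i ∈ I ∪ J, ∀ j ∈ I ∪ J, i ≠ j → Q (r i) j = 0)
    (hnonint : ∀ i ∈ I, ∀ j ∈ J, ∀ z : ℤ, Q (r i) i * Q (r j) j ≠ z)
    {ν : Measure Bool} [IsProbabilityMeasure ν] {c : ℝ≥0∞} (hc : ∀ b, ν {b} ≤ c) :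
    Measure.pi (fun _ : Edge n => ν) {ω | ∀ i ∈ I, ∀ j ∈ J, ω ∈ intEntryEvent Q i j}
      ≤ c ^ (#I * #J) := by
  have hrow_ne (t : ↥(I ×ˢ J)) : r t.1.1 ≠ r t.1.2 := by
    obtain ⟨hi, hj⟩ := mem_product.1 t.2
    intro h
    apply hnonint _ hi _ hj 0
    rw [h, hsupp _ (mem_union_right I hj) _ (mem_union_left J hi)
      (fun h' => disjoint_left.1 hIJ hi (h' ▸ hj)), zero_mul, Int.cast_zero]
  choose e he using fun t => exists_edge_flipCoeff_eq (hrow_ne t)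
  have hcoeff (t t' : ↥(I ×ˢ J)) : flipCoeff Q (e t).1.1 (e t).1.2 t'.1.1 t'.1.2 =
      if t = t' then Q (r t.1.1) t.1.1 * Q (r t.1.2) t.1.2 else 0 := by
    obtain ⟨hi, hj⟩ := mem_product.1 t.2
    obtain ⟨hi', hj'⟩ := mem_product.1 t'.2
    simp only [he, flipCoeff_eq_ite hIJ hsupp hi hi' hj hj', Subtype.ext_iff]
  calc Measure.pi (fun _ => ν) {ω | ∀ i ∈ I, ∀ j ∈ J, ω ∈ intEntryEvent Q i j}
      ≤ Measure.pi (fun _ => ν) (⋂ t ∈ (univ : Finset ↥(I ×ˢ J)), intEntryEvent Q t.1.1 t.1.2) :=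
        measure_mono fun ω hω => Set.mem_iInter₂.2 fun t _ =>
          hω _ (mem_product.1 t.2).1 _ (mem_product.1 t.2).2
    _ ≤ c ^ #(univ : Finset ↥(I ×ˢ J)) := by
        refine pi_biInter_le_pow hc univ _ e (fun t _ => ?_) fun t _ t' _ htt' => ?_
        · obtain ⟨hi, hj⟩ := mem_product.1 t.2
          exact subsingleton_update_mem_intEntryEvent (by simpa [hcoeff] using hnonint _ hi _ hj)
        · exact update_mem_intEntryEvent_iff (by simp [hcoeff, htt'])
    _ = c ^ (#I * #J) := by rw [card_univ, Fintype.card_coe, card_product]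

end IndependentEntries

def IsCanonicalForm {n : ℕ} (s : ℕ) (Q : Matrix (Fin n) (Fin n) ℚ) : Prop :=
  ∀ i j : Fin n, s ≤ (i : ℕ) ∨ s ≤ (j : ℕ) → Q i j = if i = j then 1 else 0

def colSupport {n : ℕ} (Q : Matrix (Fin n) (Fin n) ℚ) (j : Fin n) : Finset (Fin n) :=
  {k | Q k j ≠ 0}

section CanonicalForm
variable {n s h : ℕ} {Q : Matrix (Fin n) (Fin n) ℚ}

theorem mem_colSupport {j k : Fin n} : k ∈ colSupport Q j ↔ Q k j ≠ 0 := by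
  simp [colSupport]

theorem sum_sq_apply_col (hQ : Qᵀ * Q = 1) (j : Fin n) : ∑ k, Q k j ^ 2 = 1 := by
  simpa [Matrix.mul_apply, sq] using congrFun (congrFun hQ j) j

theorem sum_sq_apply_row (hQ : Qᵀ * Q = 1) (k : Fin n) : ∑ j, Q k j ^ 2 = 1 := by
  simpa [Matrix.mul_apply, sq] using congrFun (congrFun (mul_eq_one_comm.1 hQ : Q * Qᵀ = 1) k) k

theorem sq_apply_le_one (hQ : Qᵀ * Q = 1) (k j : Fin n) : Q k j ^ 2 ≤ 1 :=
  sum_sq_apply_col hQ j ▸ single_le_sum (fun k _ => sq_nonneg (Q k j)) (mem_univ k)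

theorem colSupport_nonempty (hQ : Qᵀ * Q = 1) (j : Fin n) : (colSupport Q j).Nonempty := by
  by_contra h
  simp only [not_nonempty_iff_eq_empty, filter_eq_empty_iff, colSupport, not_not] at h
  simpa [h] using sum_sq_apply_col hQ j

theorem IsCanonicalForm.apply_eq_zero (hQ : IsCanonicalForm s Q) {i j : Fin n}
    (hi : (i : ℕ) < s) (hj : s ≤ (j : ℕ)) : Q i j = 0 ∧ Q j i = 0 := by
  have hij : i ≠ j := by rintro rfl; omega
  rw [hQ i j (.inr hj), hQ j i (.inl hj), if_neg hij, if_neg hij.symm]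
  exact ⟨rfl, rfl⟩

theorem IsCanonicalForm.colSupport_eq (hQ : IsCanonicalForm s Q) {j : Fin n}
    (hj : s ≤ (j : ℕ)) : colSupport Q j = {j} := by
  ext k
  simp [mem_colSupport, hQ k j (.inr hj)]

theorem IsCanonicalForm.lt_of_mem_colSupport (hQ : IsCanonicalForm s Q) {j k : Fin n}
    (hj : (j : ℕ) < s) (hk : k ∈ colSupport Q j) : (k : ℕ) < s := by
  by_contra hks
  exact mem_colSupport.1 hk (hQ.apply_eq_zero hj (not_lt.1 hks)).2

theorem IsCanonicalForm.den_le (hQ : IsCanonicalForm s Q)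
    (hheight : ∀ i j : Fin n, (i : ℕ) < s → (j : ℕ) < s → (Q i j).den ≤ h) {k j : Fin n}
    (hkj : (k : ℕ) < s ∨ (j : ℕ) < s) (hne : Q k j ≠ 0) : (Q k j).den ≤ h := by
  rcases lt_or_ge (k : ℕ) s with hk | hk <;> rcases lt_or_ge (j : ℕ) s with hj | hj
  · exact hheight k j hk hj
  · exact absurd (hQ.apply_eq_zero hk hj).1 hne
  · exact absurd (hQ.apply_eq_zero hj hk).2 hne
  · omega

variable (hQ : Qᵀ * Q = 1) (hcan : IsCanonicalForm s Q)
  (hheight : ∀ i j : Fin n, (i : ℕ) < s → (j : ℕ) < s → (Q i j).den ≤ h)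
include hQ hcan hheight

theorem card_colSupport_le {j : Fin n} (hj : (j : ℕ) < s) : #(colSupport Q j) ≤ h ^ 2 :=
  card_ne_zero_le_sq_of_den_le (Q · j) (sum_sq_apply_col hQ j) fun _ =>
    hcan.den_le hheight (.inr hj)

theorem card_rowSupport_le {k : Fin n} (hk : (k : ℕ) < s) : #{j | Q k j ≠ 0} ≤ h ^ 2 :=
  card_ne_zero_le_sq_of_den_le (Q k) (sum_sq_apply_row hQ k) fun _ =>
    hcan.den_le hheight (.inl hk)

theorem card_filter_not_disjoint_colSupport_le (P : Finset (Fin n)) {j : Fin n}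
    (hj : (j : ℕ) < s) :
    #{j' ∈ P | ¬Disjoint (colSupport Q j') (colSupport Q j)} ≤ h ^ 2 * h ^ 2 := calc
  _ ≤ #((colSupport Q j).biUnion fun k => {j' | Q k j' ≠ 0}) := by
      refine card_le_card fun j' hj' => ?_
      obtain ⟨k, hkj', hkj⟩ := not_disjoint_iff.1 (mem_filter.1 hj').2
      exact mem_biUnion.2 ⟨k, hkj, mem_filter.2 ⟨mem_univ _, mem_colSupport.1 hkj'⟩⟩
  _ ≤ ∑ k ∈ colSupport Q j, #{j' | Q k j' ≠ 0} := card_biUnion_le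
  _ ≤ ∑ k ∈ colSupport Q j, h ^ 2 :=
      sum_le_sum fun k hk => card_rowSupport_le hQ hcan hheight (hcan.lt_of_mem_colSupport hj hk)
  _ = #(colSupport Q j) * h ^ 2 := by rw [sum_const, smul_eq_mul]
  _ ≤ h ^ 2 * h ^ 2 := Nat.mul_le_mul_right _ (card_colSupport_le hQ hcan hheight hj)

theorem exists_pairwiseDisjoint_colSupport (hs : s ≤ n) :
    ∃ C : Finset (Fin n), (∀ j ∈ C, (j : ℕ) < s) ∧
      (↑(C ∪ ({j | s ≤ (j : ℕ)} : Finset (Fin n))) : Set (Fin n)).PairwiseDisjoint (colSupport Q) ∧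
      s ≤ h ^ 4 * #C := by
  obtain ⟨C, hCB, hC, hcard⟩ := exists_pairwiseDisjoint_subset_card_le_mul (colSupport Q)
    {j : Fin n | (j : ℕ) < s} (h ^ 2 * h ^ 2) (fun j _ => colSupport_nonempty hQ j)
    fun j hj => card_filter_not_disjoint_colSupport_le hQ hcan hheight _ (mem_filter.1 hj).2
  have hCs (j) (hj : j ∈ C) : (j : ℕ) < s := (mem_filter.1 (hCB hj)).2
  refine ⟨C, hCs, ?_, by rwa [Fin.card_filter_val_lt, min_eq_right hs, ← pow_add] at hcard⟩
  rw [coe_union, Set.pairwiseDisjoint_union]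
  refine ⟨hC, fun j hj j' hj' hjj' => ?_, fun j hj j' hj' _ => ?_⟩
  · simp only [coe_filter, mem_univ, true_and, Set.mem_ofPred_eq] at hj hj'
    simpa [onFun, hcan.colSupport_eq hj, hcan.colSupport_eq hj'] using hjj'
  · simp only [coe_filter, mem_univ, true_and, Set.mem_ofPred_eq] at hj'
    simpa [onFun, hcan.colSupport_eq hj', mem_colSupport] using
      (hcan.apply_eq_zero (hCs j hj) hj').2

theorem exists_index_sets (hs : s ≤ n)
    (hno1 : ∀ i j : Fin n, (i : ℕ) < s → (j : ℕ) < s → Q i j ≠ 1 ∧ Q i j ≠ -1)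
    {a : ℕ} (ha : h ^ 4 * (2 * (a - 1)) < s) :
    ∃ (I J : Finset (Fin n)) (r : Fin n → Fin n), Disjoint I J ∧
      (∀ i ∈ I ∪ J, ∀ j ∈ I ∪ J, i ≠ j → Q (r i) j = 0) ∧
      (∀ i ∈ I, ∀ j ∈ J, ∀ z : ℤ, Q (r i) i * Q (r j) j ≠ z) ∧
      #I = a ∧ #J = a - 1 + (n - s) := by
  obtain ⟨C, hCs, hdisj, hCcard⟩ := exists_pairwiseDisjoint_colSupport hQ hcan hheight hs
  have haC : a + (a - 1) ≤ #C := by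
    have := Nat.lt_of_mul_lt_mul_left (ha.trans_le hCcard)
    omega
  obtain ⟨I, hIC, hI⟩ := exists_subset_card_eq (show a ≤ #C by omega)
  obtain ⟨J₀, hJ₀, hJ₀card⟩ := exists_subset_card_eq
    (show a - 1 ≤ #(C \ I) by rw [card_sdiff_of_subset hIC]; omega)
  choose r hr using colSupport_nonempty hQ
  set T : Finset (Fin n) := {j | s ≤ (j : ℕ)}
  have hCT : Disjoint C T := disjoint_left.2 fun j hj hjT => by
    have := hCs j hj
    simp only [T, mem_filter, mem_univ, true_and] at hjT
    omega
  have hT : #T = n - s := by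
    have := card_filter_add_card_filter_not (s := univ) (fun j : Fin n => (j : ℕ) < s)
    simp only [not_lt, Fin.card_filter_val_lt, card_univ, Fintype.card_fin, min_eq_right hs]
      at this
    exact Nat.eq_sub_of_add_eq' this
  have hsub : I ∪ (J₀ ∪ T) ⊆ C ∪ T :=
    union_subset (hIC.trans subset_union_left) (union_subset_union (hJ₀.trans sdiff_subset) le_rfl)
  refine ⟨I, J₀ ∪ T, r, ?_, fun i hi j hj hij => ?_, fun i hi j _ z => ?_, hI, ?_⟩
  · exact disjoint_union_right.2 ⟨disjoint_of_subset_right hJ₀ disjoint_sdiff,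
      disjoint_of_subset_left hIC hCT⟩
  · by_contra hne
    exact disjoint_left.1 (hdisj (hsub hi) (hsub hj) hij) (hr i) (mem_colSupport.2 hne)
  · have his := hCs i (hIC hi)
    have hri := hcan.lt_of_mem_colSupport his (hr i)
    refine Rat.mul_ne_intCast (mem_colSupport.1 (hr i)) ((sq_apply_le_one hQ _ _).lt_of_ne ?_)
      (mem_colSupport.1 (hr j)) (sq_apply_le_one hQ _ _) z
    rw [Ne, sq_eq_one_iff, not_or]
    exact hno1 _ _ hri his
  · rw [card_union_of_disjoint (disjoint_of_subset_left (hJ₀.trans sdiff_subset) hCT), hJ₀card,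
      hT]

end CanonicalForm

theorem mul_two_mul_ceil_sub_one_lt {s h : ℕ} (hm : 0 < (s : ℝ) / (2 * h ^ 4)) :
    h ^ 4 * (2 * (⌈(s : ℝ) / (2 * h ^ 4)⌉₊ - 1)) < s := by
  have hh : (0 : ℝ) < 2 * h ^ 4 := by
    rcases div_pos_iff.1 hm with hpos | hneg
    exacts [hpos.2, absurd hneg.1 (not_lt.2 (Nat.cast_nonneg s))]
  have hlt := Nat.ceil_lt_add_one hm.le
  rw [← Nat.cast_lt (α := ℝ)]
  push_cast [Nat.cast_sub (Nat.ceil_pos.2 hm)]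
  calc (h : ℝ) ^ 4 * (2 * (⌈(s : ℝ) / (2 * h ^ 4)⌉₊ - 1))
      = 2 * h ^ 4 * (⌈(s : ℝ) / (2 * h ^ 4)⌉₊ - 1) := by ring
    _ < 2 * h ^ 4 * ((s : ℝ) / (2 * h ^ 4)) := by gcongr; linarith
    _ = s := mul_div_cancel₀ _ hh.ne'

theorem mul_le_natCast_ceil_mul {m : ℝ} {k l : ℕ} (hkl : l ≤ k) (hm : 0 < m)
    (hpos : 0 ≤ m + k - l - 1) :
    m * (m + k - l - 1) ≤ ((⌈m⌉₊ * (⌈m⌉₊ - 1 + (k - l)) : ℕ) : ℝ) := by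
  rw [Nat.cast_mul, Nat.cast_add, Nat.cast_sub (Nat.ceil_pos.2 hm), Nat.cast_sub hkl,
    Nat.cast_one]
  exact mul_le_mul (Nat.le_ceil m) (by linarith [Nat.le_ceil m]) hpos (by positivity)

/-- For a fixed rational orthogonal matrix Q in canonical form diag(Q_s, I_{n-s}),
with Q_s of height at most h and no entries ±1, and A the adjacency matrix of
G(n,p), we have Pr(Qᵀ A Q integral) ≤ p̂^{(s/(2h⁴))·(s/(2h⁴)+n-s-1)}. -/
theorem stmt_14 (n s h : ℕ) (hs : s ≤ n) (p : ℝ) (hp0 : 0 < p) (hp1 : p < 1)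
    (Q : Matrix (Fin n) (Fin n) ℚ)
    (hQ : Q.transpose * Q = 1)
    (hblock : ∀ i j : Fin n, s ≤ (i : ℕ) ∨ s ≤ (j : ℕ) →
      Q i j = if i = j then 1 else 0)
    (hheight : ∀ i j : Fin n, (i : ℕ) < s → (j : ℕ) < s → (Q i j).den ≤ h)
    (hno1 : ∀ i j : Fin n, (i : ℕ) < s → (j : ℕ) < s →
      Q i j ≠ 1 ∧ Q i j ≠ -1) :
    (Measure.pi fun _ : {e : Fin n × Fin n // e.1 < e.2} =>
        (PMF.bernoulli (Real.toNNReal p)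
          (Real.toNNReal_le_one.mpr hp1.le)).toMeasure)
      {ω | ∀ i j : Fin n, ∃ z : ℤ,
        (Q.transpose * adjMat n ω * Q) i j = (z : ℚ)}
      ≤ ENNReal.ofReal (max p (1 - p)) ^
          (((s : ℝ) / (2 * (h : ℝ) ^ 4)) *
            ((s : ℝ) / (2 * (h : ℝ) ^ 4) + (n : ℝ) - (s : ℝ) - 1)) := by
  set m : ℝ := s / (2 * (h : ℝ) ^ 4) with hm_def
  have hc : ENNReal.ofReal (max p (1 - p)) ≤ 1 :=
    ENNReal.ofReal_le_one.2 (max_le hp1.le (by linarith))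
  rcases le_or_gt (m * (m + n - s - 1)) 0 with hexp | hexp
  · calc _ ≤ 1 := prob_le_one
      _ ≤ _ := by simpa using ENNReal.rpow_le_rpow_of_exponent_ge hc hexp
  have hm : 0 < m := lt_of_le_of_ne (by positivity) fun h0 => by simp [← h0] at hexp
  obtain ⟨I, J, r, hIJ, hsupp, hnonint, hI, hJ⟩ :=
    exists_index_sets hQ hblock hheight hs hno1 (mul_two_mul_ceil_sub_one_lt hm)
  have hsub : {ω | ∀ i j : Fin n, ∃ z : ℤ, (Qᵀ * adjMat n ω * Q) i j = z} ⊆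
      {ω | ∀ i ∈ I, ∀ j ∈ J, ω ∈ intEntryEvent Q i j} := fun ω hω i _ j _ => hω i j
  calc _ ≤ _ := measure_mono hsub
    _ ≤ ENNReal.ofReal (max p (1 - p)) ^ (#I * #J) := pi_setOf_forall_mem_intEntryEvent_le
        hIJ hsupp hnonint (PMF.toMeasure_bernoulli_singleton_le hp1)
    _ ≤ _ := by
        rw [← ENNReal.rpow_natCast, hI, hJ, ← hm_def]
        exact ENNReal.rpow_le_rpow_of_exponent_ge hc
          (mul_le_natCast_ceil_mul hs hm (pos_of_mul_pos_right hexp hm.le).le)
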